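/- Let f, g, h : X → Y be maps with X a normal space. Then D_m(f, g) ≤ D_m(f, h) + D_m(h, g). -/

import Mathlib

universe u

/-! Definitions of the December 2024 Mathlib file `Mathlib/Topology/CWComplex.lean`
(removed since), reproduced here with their old meaning. -/

namespace RelativeCWComplex

open CategoryTheory

/-- The `n`-dimensional sphere. -/
noncomputable def sphere (n : ℤ) : TopCat.{u} :=
  TopCat.of <| ULift <| Metric.sphere (0 : EuclideanSpace ℝ <| Fin <| (n + 1).toNat) 1

/-- The `n`-dimensional closed disk. -/
noncomputable def disk (n : ℤ) : TopCat.{u} :=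
  TopCat.of <| ULift <| Metric.closedBall (0 : EuclideanSpace ℝ <| Fin <| n.toNat) 1

/-- The inclusion of the boundary of a disk. -/
noncomputable def sphereInclusion (n : ℤ) : sphere.{u} n ⟶ disk.{u} (n + 1) :=
  TopCat.ofHom
    ⟨fun ⟨p, hp⟩ ↦ ⟨p, le_of_eq hp⟩, by
      first
        | (refine continuous_uliftUp.comp ?_
           refine Continuous.subtype_mk ?_ _
           exact continuous_subtype_val.comp continuous_uliftDown)
        | fun_prop
        | continuity⟩

/-- Attaching generalized cells along `f : S ⟶ D` to `X` gives `X'`. -/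
structure AttachGeneralizedCells {S D : TopCat.{u}} (f : S ⟶ D) (X X' : TopCat.{u}) where
  /-- The index type over the generalized cells -/
  cells : Type u
  /-- An attaching map for each generalized cell -/
  attachMaps : cells → (S ⟶ X)
  /-- `X'` is the pushout of `∐ S ⟶ X` and `∐ S ⟶ ∐ D`. -/
  iso_pushout : X' ≅ Limits.pushout (Limits.Sigma.desc attachMaps)
    (Limits.Sigma.map fun (_ : cells) ↦ f)

/-- Attaching `(n + 1)`-disks. -/
def AttachCells (n : ℤ) := AttachGeneralizedCells (sphereInclusion.{u} n)

end RelativeCWComplex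

open RelativeCWComplex in
/-- A relative CW-complex. -/
structure RelativeCWComplex where
  /-- The skeletons. -/
  sk : ℕ → TopCat.{u}
  /-- Each skeleton is obtained from the previous one by attaching `n`-disks. -/
  attachCells (n : ℕ) : AttachCells.{u} ((n : ℤ) - 1) (sk n) (sk (n + 1))

/-- A CW-complex is a relative CW-complex whose `sk 0` is empty. -/
structure CWComplex extends RelativeCWComplex.{u} where
  /-- `sk 0` is empty. -/
  isEmpty_sk_zero : IsEmpty (sk 0)

namespace RelativeCWComplex

open CategoryTheory

/-- The inclusion map from `X` to `X'`. -/
noncomputable def AttachGeneralizedCells.inclusion {S D : TopCat.{u}} {f : S ⟶ D}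
    {X X' : TopCat.{u}} (C : AttachGeneralizedCells f X X') : X ⟶ X' :=
  Limits.pushout.inl _ _ ≫ C.iso_pushout.inv

/-- The inclusion of a skeleton into the next one. -/
noncomputable def skInclusion (X : RelativeCWComplex.{u}) (n : ℕ) : X.sk n ⟶ X.sk (n + 1) :=
  AttachGeneralizedCells.inclusion (X.attachCells n)

/-- The topology on a relative CW-complex (colimit of the skeletons). -/
noncomputable def toTopCat (X : RelativeCWComplex.{u}) : TopCat.{u} :=
  Limits.colimit (Functor.ofSequence X.skInclusion)

end RelativeCWComplex

/-- The underlying topological space of a CW complex. -/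
abbrev CWSpace (K : CWComplex.{u}) : Type u := K.toRelativeCWComplex.toTopCat

/-- A CW complex has dimension at most `m` if it has no cells of dimension `> m`. -/
def CWDimLE (K : CWComplex.{u}) (m : ℕ) : Prop :=
  ∀ n : ℕ, m < n →
    IsEmpty (RelativeCWComplex.AttachGeneralizedCells.cells (K.toRelativeCWComplex.attachCells n))

/-- Hurewicz fibration: the homotopy lifting property with respect to all spaces. -/
def IsFibration {E B : Type u} [TopologicalSpace E] [TopologicalSpace B] (p : C(E, B)) : Prop :=
  ∀ (X : Type u) [TopologicalSpace X] (f : C(X, E)) (H : C(X × unitInterval, B)),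
    (∀ x, H (x, 0) = p (f x)) →
    ∃ H' : C(X × unitInterval, E), (∀ z, p (H' z) = H z) ∧ (∀ x, H' (x, 0) = f x)

/-- The inclusion of a subset as a continuous map. -/
def inclMap {X : Type u} [TopologicalSpace X] (U : Set X) : C(U, X) :=
  ⟨Subtype.val, continuous_subtype_val⟩

/-- Property `A_{m,p}`: every map into `U` from an `m`-dimensional CW complex lifts through `p`. -/
def LiftingProp {E B : Type u} [TopologicalSpace E] [TopologicalSpace B]
    (p : C(E, B)) (m : ℕ) (U : Set B) : Prop :=
  ∀ K : CWComplex.{u}, CWDimLE K m → ∀ φ : C(CWSpace K, U),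
    ∃ s : C(CWSpace K, E), ∀ x, p (s x) = (φ x : B)

/-- The `m`-sectional category of `p`, valued in `ℕ∞` (`⊤` if no finite cover exists). -/
noncomputable def secatm {E B : Type u} [TopologicalSpace E] [TopologicalSpace B]
    (p : C(E, B)) (m : ℕ) : ℕ∞ :=
  sInf ((fun n : ℕ => (n : ℕ∞)) ''
    {k : ℕ | ∃ U : Fin (k + 1) → Set B, (∀ i, IsOpen (U i)) ∧ (⋃ i, U i) = Set.univ ∧
      ∀ i, LiftingProp p m (U i)})

/-- The classical sectional category. -/
noncomputable def secat {E B : Type u} [TopologicalSpace E] [TopologicalSpace B]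
    (p : C(E, B)) : ℕ∞ :=
  sInf ((fun n : ℕ => (n : ℕ∞)) ''
    {k : ℕ | ∃ U : Fin (k + 1) → Set B, (∀ i, IsOpen (U i)) ∧ (⋃ i, U i) = Set.univ ∧
      ∀ i, ∃ s : C((U i : Set B), E), ∀ x, p (s x) = (x : B)})

/-- Property `B_m`. -/
def NullProp {X : Type u} [TopologicalSpace X] (m : ℕ) (U : Set X) : Prop :=
  ∀ K : CWComplex.{u}, CWDimLE K m → ∀ φ : C(CWSpace K, U),
    ((inclMap U).comp φ).Nullhomotopic

/-- The `m`-dimensional Lusternik–Schnirelmann category. -/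
noncomputable def catm (X : Type u) [TopologicalSpace X] (m : ℕ) : ℕ∞ :=
  sInf ((fun n : ℕ => (n : ℕ∞)) ''
    {k : ℕ | ∃ U : Fin (k + 1) → Set X, (∀ i, IsOpen (U i)) ∧ (⋃ i, U i) = Set.univ ∧
      ∀ i, NullProp m (U i)})

/-- Classical (normalized) LS category. -/
noncomputable def catLS (X : Type u) [TopologicalSpace X] : ℕ∞ :=
  sInf ((fun n : ℕ => (n : ℕ∞)) ''
    {k : ℕ | ∃ U : Fin (k + 1) → Set X, (∀ i, IsOpen (U i)) ∧ (⋃ i, U i) = Set.univ ∧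
      ∀ i, (inclMap (U i)).Nullhomotopic})

/-- Property `C_{m,f}`. -/
def NullPropMap {X Y : Type u} [TopologicalSpace X] [TopologicalSpace Y]
    (f : C(X, Y)) (m : ℕ) (U : Set X) : Prop :=
  ∀ K : CWComplex.{u}, CWDimLE K m → ∀ φ : C(CWSpace K, U),
    ((f.comp (inclMap U)).comp φ).Nullhomotopic

/-- The `m`-dimensional LS category of a map. -/
noncomputable def catmMap {X Y : Type u} [TopologicalSpace X] [TopologicalSpace Y]
    (f : C(X, Y)) (m : ℕ) : ℕ∞ :=
  sInf ((fun n : ℕ => (n : ℕ∞)) ''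
    {k : ℕ | ∃ U : Fin (k + 1) → Set X, (∀ i, IsOpen (U i)) ∧ (⋃ i, U i) = Set.univ ∧
      ∀ i, NullPropMap f m (U i)})

/-- Property `D_{m,f,g}`. -/
def DistProp {X Y : Type u} [TopologicalSpace X] [TopologicalSpace Y]
    (f g : C(X, Y)) (m : ℕ) (U : Set X) : Prop :=
  ∀ K : CWComplex.{u}, CWDimLE K m → ∀ φ : C(CWSpace K, U),
    ((f.comp (inclMap U)).comp φ).Homotopic ((g.comp (inclMap U)).comp φ)

/-- The `m`-homotopic distance. -/
noncomputable def homDistm {X Y : Type u} [TopologicalSpace X] [TopologicalSpace Y]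
    (f g : C(X, Y)) (m : ℕ) : ℕ∞ :=
  sInf ((fun n : ℕ => (n : ℕ∞)) ''
    {k : ℕ | ∃ U : Fin (k + 1) → Set X, (∀ i, IsOpen (U i)) ∧ (⋃ i, U i) = Set.univ ∧
      ∀ i, DistProp f g m (U i)})

namespace Stmt18Aux

open Set

variable {X Y : Type u} [TopologicalSpace X] [TopologicalSpace Y]

/-- `DistProp` is inherited by subsets. -/
lemma distProp_mono (f g : C(X, Y)) (m : ℕ) {U V : Set X} (hUV : V ⊆ U)
    (hU : DistProp f g m U) : DistProp f g m V := by
  intro K hK φ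
  let ψ : C(CWSpace K, U) :=
    ⟨fun x => ⟨(φ x : X), hUV (φ x).2⟩,
      (continuous_subtype_val.comp φ.continuous).subtype_mk _⟩
  have h := hU K hK ψ
  have e1 : (f.comp (inclMap U)).comp ψ = (f.comp (inclMap V)).comp φ := rfl
  have e2 : (g.comp (inclMap U)).comp ψ = (g.comp (inclMap V)).comp φ := rfl
  rwa [e1, e2] at h

/-- `DistProp` is transitive in the two maps. -/
lemma distProp_trans (f g h : C(X, Y)) (m : ℕ) {U : Set X}
    (h1 : DistProp f h m U) (h2 : DistProp h g m U) : DistProp f g m U :=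
  fun K hK φ => (h1 K hK φ).trans (h2 K hK φ)

/-- `DistProp` is inherited by unions of pairwise disjoint open sets. -/
lemma distProp_iUnion (f g : C(X, Y)) (m : ℕ) {ι : Type} (G : ι → Set X)
    (hopen : ∀ t, IsOpen (G t))
    (hdisj : ∀ t t', t ≠ t' → Disjoint (G t) (G t'))
    (hprop : ∀ t, DistProp f g m (G t)) :
    DistProp f g m (⋃ t, G t) := by
  classical
  intro K hK φ
  have hmem : ∀ x : CWSpace K, ∃ t, (φ x : X) ∈ G t := fun x => mem_iUnion.mp (φ x).2
  choose idx hidx using hmem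
  set S : ι → Set (CWSpace K) := fun t => (fun x => (φ x : X)) ⁻¹' (G t) with hS
  have hcontval : Continuous fun x : CWSpace K => (φ x : X) :=
    continuous_subtype_val.comp φ.continuous
  have hSopen : ∀ t, IsOpen (S t) := fun t => (hopen t).preimage hcontval
  have hidxS : ∀ x, x ∈ S (idx x) := fun x => hidx x
  have hSuniq : ∀ t x, x ∈ S t → idx x = t := by
    intro t x hx
    by_contra hne
    exact Set.disjoint_left.mp (hdisj _ _ hne) (hidx x) hx
  have hSclosed : ∀ t, IsClosed (S t) := by
    intro t
    rw [← isOpen_compl_iff]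
    have hc : (S t)ᶜ = ⋃ t' ∈ {t' | t' ≠ t}, S t' := by
      ext x
      simp only [mem_compl_iff, mem_iUnion, mem_setOf_eq]
      constructor
      · intro hx
        exact ⟨idx x, fun he => hx (he ▸ hidxS x), hidxS x⟩
      · rintro ⟨t', ht', hxt'⟩ hxt
        exact ht' (by rw [← hSuniq t' x hxt', hSuniq t x hxt])
    rw [hc]
    exact isOpen_biUnion fun t' _ => hSopen t'
  have hfr : ∀ t, frontier (S t) = ∅ := fun t =>
    IsClopen.frontier_eq ⟨hSclosed t, hSopen t⟩
  -- For each `t` with `G t` nonempty, a continuous map into `G t` agreeing with `φ` on `S t`.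
  let c : ∀ t, (G t).Nonempty → CWSpace K → X := fun t h =>
    (S t).piecewise (fun x => (φ x : X)) (fun _ => h.choose)
  have hcmem : ∀ t (h : (G t).Nonempty) x, c t h x ∈ G t := by
    intro t h x
    by_cases hx : x ∈ S t
    · rw [show c t h x = (φ x : X) from Set.piecewise_eq_of_mem _ _ _ hx]
      exact hx
    · rw [show c t h x = h.choose from Set.piecewise_eq_of_notMem _ _ _ hx]
      exact h.choose_spec
  have hccont : ∀ t (h : (G t).Nonempty), Continuous (c t h) := by
    intro t h
    refine Continuous.piecewise ?_ hcontval continuous_const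
    intro a ha
    rw [hfr t] at ha
    exact absurd ha (notMem_empty a)
  let Φ : ∀ t, (G t).Nonempty → C(CWSpace K, (G t : Set X)) := fun t h =>
    ⟨fun x => ⟨c t h x, hcmem t h x⟩, (hccont t h).subtype_mk _⟩
  have hne : ∀ x : CWSpace K, (G (idx x)).Nonempty := fun x => ⟨_, hidx x⟩
  let Ht : ∀ t (h : (G t).Nonempty),
      ContinuousMap.Homotopy ((f.comp (inclMap (G t))).comp (Φ t h))
        ((g.comp (inclMap (G t))).comp (Φ t h)) := fun t h =>
    (hprop t K hK (Φ t h)).some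
  -- the glued homotopy
  let E : unitInterval × CWSpace K → Y := fun p => Ht (idx p.2) (hne p.2) p
  have hkey : ∀ (t : ι) (h : (G t).Nonempty) (x : CWSpace K), x ∈ S t →
      ∀ s : unitInterval, E (s, x) = Ht t h (s, x) := by
    intro t h x hx s
    have he : idx x = t := hSuniq t x hx
    subst he
    rfl
  have hEcont : Continuous E := by
    rw [continuous_iff_continuousAt]
    rintro ⟨s, x⟩
    have hnb : (univ ×ˢ S (idx x)) ∈ nhds (s, x) :=
      prod_mem_nhds Filter.univ_mem (((hSopen (idx x)).mem_nhds (hidxS x)))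
    have hev : E =ᶠ[nhds (s, x)] fun p => Ht (idx x) (hne x) p := by
      refine Filter.eventually_of_mem hnb ?_
      rintro ⟨s', x'⟩ hp
      exact hkey (idx x) (hne x) x' hp.2 s'
    rw [continuousAt_congr hev]
    exact (Ht (idx x) (hne x)).continuous.continuousAt
  have hval : ∀ x : CWSpace K, ((Φ (idx x) (hne x)) x : X) = (φ x : X) := by
    intro x
    show (S (idx x)).piecewise (fun x => (φ x : X)) (fun _ => (hne x).choose) x = (φ x : X)
    exact Set.piecewise_eq_of_mem _ _ _ (hidxS x)
  refine ⟨⟨⟨E, hEcont⟩, ?_, ?_⟩⟩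
  · intro x
    show E (0, x) = ((f.comp (inclMap (⋃ t, G t))).comp φ) x
    have h0 : E (0, x) = Ht (idx x) (hne x) (0, x) := rfl
    rw [h0, (Ht (idx x) (hne x)).apply_zero x]
    show f ((Φ (idx x) (hne x)) x : X) = f (φ x : X)
    rw [hval x]
  · intro x
    show E (1, x) = ((g.comp (inclMap (⋃ t, G t))).comp φ) x
    have h1 : E (1, x) = Ht (idx x) (hne x) (1, x) := rfl
    rw [h1, (Ht (idx x) (hne x)).apply_one x]
    show g ((Φ (idx x) (hne x)) x : X) = g (φ x : X)
    rw [hval x]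

/-- Combining two covers over a normal space. -/
lemma exists_combined_cover [NormalSpace X] (f g h : C(X, Y)) (m a b : ℕ)
    (U : Fin (a + 1) → Set X) (hUo : ∀ i, IsOpen (U i)) (hUc : (⋃ i, U i) = univ)
    (hUp : ∀ i, DistProp f h m (U i))
    (V : Fin (b + 1) → Set X) (hVo : ∀ j, IsOpen (V j)) (hVc : (⋃ j, V j) = univ)
    (hVp : ∀ j, DistProp h g m (V j)) :
    ∃ W : Fin (a + b + 1) → Set X, (∀ s, IsOpen (W s)) ∧ (⋃ s, W s) = univ ∧
      ∀ s, DistProp f g m (W s) := by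
  obtain ⟨fb, hfb⟩ := BumpCovering.exists_isSubordinate_of_locallyFinite isClosed_univ U hUo
    (locallyFinite_of_finite _) (by rw [hUc])
  obtain ⟨gb, hgb⟩ := BumpCovering.exists_isSubordinate_of_locallyFinite isClosed_univ V hVo
    (locallyFinite_of_finite _) (by rw [hVc])
  set φ : Fin (a + 1) → X → ℝ := fun i x => fb i x with hφdef
  set ψ : Fin (b + 1) → X → ℝ := fun j x => gb j x with hψdef
  have hφ0 : ∀ i x, 0 ≤ φ i x := fun i x => fb.nonneg i x
  have hψ0 : ∀ j x, 0 ≤ ψ j x := fun j x => gb.nonneg j x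
  have hφ1 : ∀ x, ∃ i, φ i x = 1 := fun x =>
    (fb.eventuallyEq_one' x (mem_univ x)).imp fun i hi => hi.eq_of_nhds
  have hψ1 : ∀ x, ∃ j, ψ j x = 1 := fun x =>
    (gb.eventuallyEq_one' x (mem_univ x)).imp fun j hj => hj.eq_of_nhds
  have hφc : ∀ i, Continuous fun x => φ i x := fun i => (fb i).continuous
  have hψc : ∀ j, Continuous fun x => ψ j x := fun j => (gb j).continuous
  have hφU : ∀ i x, 0 < φ i x → x ∈ U i := fun i x hx =>
    hfb i (subset_tsupport _ (ne_of_gt hx))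
  have hψV : ∀ j x, 0 < ψ j x → x ∈ V j := fun j x hx =>
    hgb j (subset_tsupport _ (ne_of_gt hx))
  -- the basic open pieces
  set A : Finset (Fin (a + 1)) → Finset (Fin (b + 1)) → Set X := fun P Q =>
    {x | ∀ i ∈ P, ∀ j ∈ Q, 0 < φ i x * ψ j x ∧
      ∀ i' j', (i' ∉ P ∨ j' ∉ Q) → φ i' x * ψ j' x < φ i x * ψ j x} with hAdef
  have hAopen : ∀ P Q, IsOpen (A P Q) := by
    intro P Q
    have heq : A P Q = ⋂ i ∈ P, ⋂ j ∈ Q,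
        ({x | 0 < φ i x * ψ j x} ∩
          ⋂ i', ⋂ j', ⋂ (_ : i' ∉ P ∨ j' ∉ Q), {x | φ i' x * ψ j' x < φ i x * ψ j x}) := by
      ext x
      simp only [hAdef, mem_setOf_eq, mem_iInter, mem_inter_iff]
    rw [heq]
    refine isOpen_biInter_finset fun i _ => isOpen_biInter_finset fun j _ => ?_
    refine IsOpen.inter (isOpen_lt continuous_const ((hφc i).mul (hψc j))) ?_
    refine isOpen_iInter_of_finite fun i' => isOpen_iInter_of_finite fun j' =>
      isOpen_iInter_of_finite fun _ => isOpen_lt ((hφc i').mul (hψc j')) ((hφc i).mul (hψc j))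
  -- index type for the pieces making up `W s`
  let Idx : Fin (a + b + 1) → Type := fun s =>
    {pq : Finset (Fin (a + 1)) × Finset (Fin (b + 1)) //
      pq.1.Nonempty ∧ pq.2.Nonempty ∧ pq.1.card + pq.2.card = (s : ℕ) + 2}
  refine ⟨fun s => ⋃ t : Idx s, A t.1.1 t.1.2, fun s => isOpen_iUnion fun t => hAopen _ _,
    ?_, ?_⟩
  · -- covering
    apply eq_univ_of_forall
    intro x
    -- argmax sets
    set P : Finset (Fin (a + 1)) := Finset.univ.filter (fun i => ∀ i', φ i' x ≤ φ i x) with hPdef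
    set Q : Finset (Fin (b + 1)) := Finset.univ.filter (fun j => ∀ j', ψ j' x ≤ ψ j x) with hQdef
    obtain ⟨i0, -, hi0⟩ := Finset.exists_max_image Finset.univ (fun i => φ i x)
      ⟨0, Finset.mem_univ 0⟩
    obtain ⟨j0, -, hj0⟩ := Finset.exists_max_image Finset.univ (fun j => ψ j x)
      ⟨0, Finset.mem_univ 0⟩
    have hi0P : i0 ∈ P := by
      rw [hPdef, Finset.mem_filter]
      exact ⟨Finset.mem_univ _, fun i' => hi0 i' (Finset.mem_univ i')⟩
    have hj0Q : j0 ∈ Q := by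
      rw [hQdef, Finset.mem_filter]
      exact ⟨Finset.mem_univ _, fun j' => hj0 j' (Finset.mem_univ j')⟩
    have hPmax : ∀ i ∈ P, ∀ i', φ i' x ≤ φ i x := by
      intro i hi
      rw [hPdef, Finset.mem_filter] at hi
      exact hi.2
    have hQmax : ∀ j ∈ Q, ∀ j', ψ j' x ≤ ψ j x := by
      intro j hj
      rw [hQdef, Finset.mem_filter] at hj
      exact hj.2
    have hPpos : ∀ i ∈ P, 0 < φ i x := by
      intro i hi
      obtain ⟨i1, hi1⟩ := hφ1 x
      calc (0 : ℝ) < 1 := one_pos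
        _ = φ i1 x := hi1.symm
        _ ≤ φ i x := hPmax i hi i1
    have hQpos : ∀ j ∈ Q, 0 < ψ j x := by
      intro j hj
      obtain ⟨j1, hj1⟩ := hψ1 x
      calc (0 : ℝ) < 1 := one_pos
        _ = ψ j1 x := hj1.symm
        _ ≤ ψ j x := hQmax j hj j1
    have hxA : x ∈ A P Q := by
      intro i hi j hj
      refine ⟨mul_pos (hPpos i hi) (hQpos j hj), ?_⟩
      rintro i' j' (hi' | hj')
      · have hlt : φ i' x < φ i x := by
          rw [hPdef, Finset.mem_filter] at hi'
          push_neg at hi'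
          obtain ⟨i'', hi''⟩ := hi' (Finset.mem_univ i')
          exact lt_of_lt_of_le hi'' (hPmax i hi i'')
        calc φ i' x * ψ j' x ≤ φ i' x * ψ j x :=
              mul_le_mul_of_nonneg_left (hQmax j hj j') (hφ0 i' x)
          _ < φ i x * ψ j x := mul_lt_mul_of_pos_right hlt (hQpos j hj)
      · have hlt : ψ j' x < ψ j x := by
          rw [hQdef, Finset.mem_filter] at hj'
          push_neg at hj'
          obtain ⟨j'', hj''⟩ := hj' (Finset.mem_univ j')
          exact lt_of_lt_of_le hj'' (hQmax j hj j'')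
        calc φ i' x * ψ j' x ≤ φ i x * ψ j' x :=
              mul_le_mul_of_nonneg_right (hPmax i hi i') (hψ0 j' x)
          _ < φ i x * ψ j x := mul_lt_mul_of_pos_left hlt (hPpos i hi)
    have hPcard : 1 ≤ P.card := Finset.card_pos.mpr ⟨i0, hi0P⟩
    have hQcard : 1 ≤ Q.card := Finset.card_pos.mpr ⟨j0, hj0Q⟩
    have hPcard' : P.card ≤ a + 1 := by
      calc P.card ≤ (Finset.univ : Finset (Fin (a + 1))).card := Finset.card_le_univ P
        _ = a + 1 := Finset.card_fin _
    have hQcard' : Q.card ≤ b + 1 := by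
      calc Q.card ≤ (Finset.univ : Finset (Fin (b + 1))).card := Finset.card_le_univ Q
        _ = b + 1 := Finset.card_fin _
    refine mem_iUnion.mpr ⟨⟨P.card + Q.card - 2, by omega⟩, ?_⟩
    refine mem_iUnion.mpr ⟨⟨(P, Q), ⟨i0, hi0P⟩, ⟨j0, hj0Q⟩, ?_⟩, hxA⟩
    show P.card + Q.card = (P.card + Q.card - 2) + 2
    omega
  · -- each piece of the cover has the distance property
    intro s
    refine distProp_iUnion f g m (fun t : Idx s => A t.1.1 t.1.2) (fun t => hAopen _ _)
      ?_ ?_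
    · -- pairwise disjointness
      rintro ⟨⟨P, Q⟩, hPne, hQne, hcard⟩ ⟨⟨P', Q'⟩, hPne', hQne', hcard'⟩ hne
      have hvalne : (P, Q) ≠ (P', Q') := fun he => hne (Subtype.ext he)
      have hcardPQ : P.card + Q.card = (s : ℕ) + 2 := hcard
      have hcardPQ' : P'.card + Q'.card = (s : ℕ) + 2 := hcard'
      rw [Set.disjoint_left]
      intro x hx hx'
      have hnotsub : ¬(P ⊆ P' ∧ Q ⊆ Q') := by
        rintro ⟨h1, h2⟩
        have hc1 : P.card ≤ P'.card := Finset.card_le_card h1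
        have hc2 : Q.card ≤ Q'.card := Finset.card_le_card h2
        have he1 : P = P' := Finset.eq_of_subset_of_card_le h1 (by omega)
        have he2 : Q = Q' := Finset.eq_of_subset_of_card_le h2 (by omega)
        exact hvalne (by rw [he1, he2])
      have hnotsub' : ¬(P' ⊆ P ∧ Q' ⊆ Q) := by
        rintro ⟨h1, h2⟩
        have hc1 : P'.card ≤ P.card := Finset.card_le_card h1
        have hc2 : Q'.card ≤ Q.card := Finset.card_le_card h2
        have he1 : P' = P := Finset.eq_of_subset_of_card_le h1 (by omega)
        have he2 : Q' = Q := Finset.eq_of_subset_of_card_le h2 (by omega)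
        exact hvalne (by rw [he1, he2])
      have hwit : ∀ (P₁ P₂ : Finset (Fin (a + 1))) (Q₁ Q₂ : Finset (Fin (b + 1))),
          P₁.Nonempty → Q₁.Nonempty → ¬(P₁ ⊆ P₂ ∧ Q₁ ⊆ Q₂) →
          ∃ i ∈ P₁, ∃ j ∈ Q₁, (i ∉ P₂ ∨ j ∉ Q₂) := by
        intro P₁ P₂ Q₁ Q₂ h₁ h₂ hns
        by_cases hPP : P₁ ⊆ P₂
        · have hQQ : ¬Q₁ ⊆ Q₂ := fun hq => hns ⟨hPP, hq⟩
          obtain ⟨j, hjQ, hjQ'⟩ := Finset.not_subset.mp hQQ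
          exact ⟨h₁.choose, h₁.choose_spec, j, hjQ, Or.inr hjQ'⟩
        · obtain ⟨i, hiP, hiP'⟩ := Finset.not_subset.mp hPP
          exact ⟨i, hiP, h₂.choose, h₂.choose_spec, Or.inl hiP'⟩
      obtain ⟨i, hi, j, hj, hcond⟩ := hwit P P' Q Q' hPne hQne hnotsub
      obtain ⟨i', hi', j', hj', hcond'⟩ := hwit P' P Q' Q hPne' hQne' hnotsub'
      have l1 : φ i' x * ψ j' x < φ i x * ψ j x := (hx i hi j hj).2 i' j' hcond'
      have l2 : φ i x * ψ j x < φ i' x * ψ j' x := (hx' i' hi' j' hj').2 i j hcond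
      linarith
    · -- property on each piece
      rintro ⟨⟨P, Q⟩, hPne, hQne, hcard⟩
      obtain ⟨i, hi⟩ := hPne
      obtain ⟨j, hj⟩ := hQne
      have hsubU : A P Q ⊆ U i := by
        intro x hx
        have h1 := (hx i hi j hj).1
        have hφpos : 0 < φ i x := by
          rcases lt_or_eq_of_le (hφ0 i x) with hlt | heq
          · exact hlt
          · exfalso; rw [← heq, zero_mul] at h1; exact lt_irrefl 0 h1
        exact hφU i x hφpos
      have hsubV : A P Q ⊆ V j := by
        intro x hx
        have h1 := (hx i hi j hj).1
        have hψpos : 0 < ψ j x := by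
          rcases lt_or_eq_of_le (hψ0 j x) with hlt | heq
          · exact hlt
          · exfalso; rw [← heq, mul_zero] at h1; exact lt_irrefl 0 h1
        exact hψV j x hψpos
      exact distProp_trans f g h m (distProp_mono f h m hsubU (hUp i))
        (distProp_mono h g m hsubV (hVp j))

/-- In `ℕ∞`, the infimum of a nonempty set is attained. -/
lemma sInf_mem_of_nonempty {S : Set ℕ∞} (h : S.Nonempty) : sInf S ∈ S := by
  obtain ⟨a, haS, hmin⟩ := wellFounded_lt.has_min S h
  have he : sInf S = a :=
    le_antisymm (sInf_le haS) (le_sInf fun b hb => not_lt.mp (hmin b hb))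
  rw [he]; exact haS

/-- If the infimum defining `homDistm` is not `⊤`, it is attained. -/
lemma extract (f g : C(X, Y)) (m : ℕ) (hne : homDistm f g m ≠ ⊤) :
    ∃ k : ℕ, homDistm f g m = (k : ℕ∞) ∧
      ∃ U : Fin (k + 1) → Set X, (∀ i, IsOpen (U i)) ∧ (⋃ i, U i) = Set.univ ∧
        ∀ i, DistProp f g m (U i) := by
  set S : Set ℕ∞ := (fun n : ℕ => (n : ℕ∞)) ''
    {k : ℕ | ∃ U : Fin (k + 1) → Set X, (∀ i, IsOpen (U i)) ∧ (⋃ i, U i) = Set.univ ∧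
      ∀ i, DistProp f g m (U i)} with hSdef
  have hS : homDistm f g m = sInf S := rfl
  have hnonempty : S.Nonempty := by
    by_contra hS0
    rw [Set.not_nonempty_iff_eq_empty] at hS0
    apply hne
    rw [hS, hS0, sInf_empty]
  have hmem : sInf S ∈ S := sInf_mem_of_nonempty hnonempty
  obtain ⟨k, hkT, hk⟩ := hmem
  refine ⟨k, ?_, hkT⟩
  rw [hS]
  exact hk.symm

end Stmt18Aux

/-- Triangle inequality for the `m`-homotopic distance over a normal space. -/
theorem stmt18 {X Y : Type u} [TopologicalSpace X] [TopologicalSpace Y] [NormalSpace X]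
    (f g h : C(X, Y)) (m : ℕ) :
    homDistm f g m ≤ homDistm f h m + homDistm h g m := by
  by_cases h1 : homDistm f h m = ⊤
  · rw [h1, top_add]; exact le_top
  by_cases h2 : homDistm h g m = ⊤
  · rw [h2, add_top]; exact le_top
  obtain ⟨k1, hk1, U, hUo, hUc, hUp⟩ := Stmt18Aux.extract f h m h1
  obtain ⟨k2, hk2, V, hVo, hVc, hVp⟩ := Stmt18Aux.extract h g m h2
  obtain ⟨W, hWo, hWc, hWp⟩ :=
    Stmt18Aux.exists_combined_cover f g h m k1 k2 U hUo hUc hUp V hVo hVc hVp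
  have hle : homDistm f g m ≤ ((k1 + k2 : ℕ) : ℕ∞) := by
    apply sInf_le
    exact ⟨k1 + k2, ⟨W, hWo, hWc, hWp⟩, rfl⟩
  rw [hk1, hk2, ← Nat.cast_add]
  exact hle
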